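/- Let C₁ = {x ∈ ℝ^n : ‖x‖₀ = 1} and C₂ = [0,1]^n. For any z ∈ ℝ^n with a unique coordinate of strictly maximal value that is positive, prox_{C₁∩C₂}(z) = prox_{C₂}(prox_{C₁}(z)), where prox_{C} denotes the Euclidean projection onto C. -/

import Mathlib

/-- For z with a unique strictly maximal coordinate istar whose value is positive,
the Euclidean projection onto C₁ ∩ C₂ (C₁ = one-nonzero-entry vectors, C₂ = unit box)
equals the composition prox_{C₂} ∘ prox_{C₁} applied to z. -/
theorem prox_C1_inter_C2_eq_composition (n : ℕ) (z : EuclideanSpace ℝ (Fin n))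
    (istar : Fin n) (hmax : ∀ j : Fin n, j ≠ istar → z j < z istar)
    (hpos : 0 < z istar) :
    let C₁ : Set (EuclideanSpace ℝ (Fin n)) :=
      {x | (Finset.univ.filter (fun j => x j ≠ 0)).card = 1}
    let C₂ : Set (EuclideanSpace ℝ (Fin n)) := {x | ∀ i, 0 ≤ x i ∧ x i ≤ 1}
    -- prox_{C₁}(z): keep the maximal entry, zero the others
    let p₁ : EuclideanSpace ℝ (Fin n) := WithLp.toLp 2 (fun j => if j = istar then z istar else 0)
    -- prox_{C₂}: coordinatewise clamping to [0,1]
    let p : EuclideanSpace ℝ (Fin n) := WithLp.toLp 2 (fun i => min (max (p₁ i) 0) 1)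
    p ∈ C₁ ∩ C₂ ∧ ∀ x ∈ C₁ ∩ C₂, ‖p - z‖ ≤ ‖x - z‖ := by
  intro C₁ C₂ p₁ p
  have hp : ∀ i, p i = if i = istar then min (z istar) 1 else 0 := by
    intro i
    by_cases h : i = istar <;> simp [p, p₁, h, max_eq_left hpos.le]
  have hcpos : 0 < min (z istar) 1 := lt_min hpos one_pos
  constructor
  · constructor
    · show (Finset.univ.filter (fun j => p j ≠ 0)).card = 1
      have hset : (Finset.univ.filter (fun j => p j ≠ 0)) = {istar} := by
        ext j
        simp only [Finset.mem_filter, Finset.mem_univ, true_and, Finset.mem_singleton]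
        constructor
        · intro h
          by_contra hj
          exact h (by simp [hp, hj])
        · intro h; subst h; rw [hp]; simp; exact ne_of_gt hcpos
      rw [hset]; simp
    · intro i
      rw [hp]
      split_ifs with h
      · exact ⟨hcpos.le, min_le_right _ _⟩
      · exact ⟨le_refl 0, zero_le_one⟩
  · intro x hx
    obtain ⟨hx1, hx2⟩ := hx
    obtain ⟨k, hk⟩ := Finset.card_eq_one.mp hx1
    have hxk : x k ≠ 0 := by
      have : k ∈ Finset.univ.filter (fun j => x j ≠ 0) := hk ▸ Finset.mem_singleton_self k
      exact (Finset.mem_filter.mp this).2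
    have hxo : ∀ j, j ≠ k → x j = 0 := by
      intro j hj
      by_contra h
      have : j ∈ Finset.univ.filter (fun j => x j ≠ 0) := Finset.mem_filter.mpr ⟨Finset.mem_univ _, h⟩
      rw [hk, Finset.mem_singleton] at this
      exact hj this
    have hxk0 : 0 < x k := lt_of_le_of_ne (hx2 k).1 (Ne.symm hxk)
    have hxk1 : x k ≤ 1 := (hx2 k).2
    rw [EuclideanSpace.norm_eq, EuclideanSpace.norm_eq]
    apply Real.sqrt_le_sqrt
    have hL : ∑ i, ‖(p - z) i‖ ^ 2
        = (min (z istar) 1 - z istar) ^ 2 + ∑ i ∈ Finset.univ.erase istar, (z i) ^ 2 := by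
      rw [← Finset.add_sum_erase _ _ (Finset.mem_univ istar)]
      congr 1
      · simp [hp, Real.norm_eq_abs, sq_abs]
      · apply Finset.sum_congr rfl
        intro i hi
        have : i ≠ istar := (Finset.mem_erase.mp hi).1
        simp [hp, this, Real.norm_eq_abs, sq_abs]
    have hR : ∑ i, ‖(x - z) i‖ ^ 2
        = (x k - z k) ^ 2 + ∑ i ∈ Finset.univ.erase k, (z i) ^ 2 := by
      rw [← Finset.add_sum_erase _ _ (Finset.mem_univ k)]
      congr 1
      · simp [Real.norm_eq_abs, sq_abs]
      · apply Finset.sum_congr rfl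
        intro i hi
        have : i ≠ k := (Finset.mem_erase.mp hi).1
        simp [hxo i this, Real.norm_eq_abs, sq_abs]
    rw [hL, hR]
    by_cases hki : k = istar
    · subst hki
      have : (min (z k) 1 - z k) ^ 2 ≤ (x k - z k) ^ 2 := by
        rcases le_total (z k) 1 with h | h
        · rw [min_eq_left h]; simpa using sq_nonneg (x k - z k)
        · rw [min_eq_right h]
          nlinarith [hxk1, hxk0, h]
      linarith
    · have hE1 : ∑ i ∈ Finset.univ.erase istar, (z i) ^ 2
          = (∑ i, (z i) ^ 2) - (z istar) ^ 2 := by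
        rw [← Finset.add_sum_erase _ (fun i => (z i)^2) (Finset.mem_univ istar)]; ring
      have hE2 : ∑ i ∈ Finset.univ.erase k, (z i) ^ 2
          = (∑ i, (z i) ^ 2) - (z k) ^ 2 := by
        rw [← Finset.add_sum_erase _ (fun i => (z i)^2) (Finset.mem_univ k)]; ring
      rw [hE1, hE2]
      have hzk : z k < z istar := hmax k hki
      have htb : x k * z k ≤ x k * z istar := mul_le_mul_of_nonneg_left hzk.le hxk0.le
      rcases le_total (z istar) 1 with h | h
      · rw [min_eq_left h]
        nlinarith [sq_nonneg (x k - z istar)]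
      · rw [min_eq_right h]
        nlinarith [mul_nonneg (sub_nonneg.mpr hxk1) (by linarith : (0:ℝ) ≤ 2 * z istar - 1 - x k)]
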